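/- arXiv:2012.15787 — 2 statements merged into one kernel-verified Lean document; each statement's English description precedes it below -/
import Mathlib

section
/- Let P be a finite Γ-colored d-complete poset with Γ simply laced, and let x < y in P be such that the closed interval [x,y] is a chain. Then the coloring κ is injective on [x,y]; i.e., there are no repeated colors in this interval. -/
/-!
Common definitions: Dynkin diagram data, Γ-colored posets, and the coloring
properties EC, NA, AC, ICE2, UCB1, LCB1 from the paper, together with
Γ-colored d-complete and Γ-colored minuscule posets, top trees, slant
irreducibility, extensions, lower frontier censuses, and full heaps.
-/

universe u v w

variable {Γ : Type u} {P : Type v}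

/-- The integers `θ a b` form a Dynkin diagram datum. -/
def DynkinDatum (θ : Γ → Γ → ℤ) : Prop :=
  (∀ a : Γ, θ a a = 2) ∧ (∀ a b : Γ, a ≠ b → θ a b ≤ 0) ∧
    (∀ a b : Γ, a ≠ b → (θ a b = 0 ↔ θ b a = 0))

/-- Colors `a` and `b` are adjacent. -/
def AdjColor (θ : Γ → Γ → ℤ) (a b : Γ) : Prop := θ a b < 0

/-- The Dynkin diagram is simply laced. -/
def SimplyLaced (θ : Γ → Γ → ℤ) : Prop :=
  ∀ a b : Γ, a ≠ b → θ a b = 0 ∨ θ a b = -1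

/-- All closed intervals are finite. -/
def LocallyFinitePoset (α : Type*) [PartialOrder α] : Prop :=
  ∀ x y : α, (Set.Icc x y).Finite

/-- A poset is connected if it cannot be written as a disjoint union of two nonempty
subposets with no comparabilities between them. -/
def ConnectedPoset (α : Type*) [PartialOrder α] : Prop :=
  ∀ S : Set α, S.Nonempty → Sᶜ.Nonempty → ∃ x ∈ S, ∃ y ∈ Sᶜ, x ≤ y ∨ y ≤ x

section
variable [PartialOrder P]

/-- (EC) Elements with equal colors are comparable. -/
def ColoredEC (κ : P → Γ) : Prop := ∀ x y : P, κ x = κ y → x ≤ y ∨ y ≤ x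

/-- (NA) Neighbors have adjacent colors. -/
def ColoredNA (θ : Γ → Γ → ℤ) (κ : P → Γ) : Prop :=
  ∀ x y : P, x ⋖ y → AdjColor θ (κ x) (κ y)

/-- (AC) Elements with adjacent colors are comparable. -/
def ColoredAC (θ : Γ → Γ → ℤ) (κ : P → Γ) : Prop :=
  ∀ x y : P, AdjColor θ (κ x) (κ y) → x ≤ y ∨ y ≤ x

/-- (ICE2) Between consecutive elements of a color `a`, the census of colors
adjacent to `a` is two. -/
def ColoredICE2 (θ : Γ → Γ → ℤ) (κ : P → Γ) : Prop :=
  ∀ (a : Γ) (x y : P), κ x = a → κ y = a → x < y → (∀ z ∈ Set.Ioo x y, κ z ≠ a) →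
    (∑ᶠ z ∈ Set.Ioo x y, -θ (κ z) a) = 2

/-- `U(x,P)`: elements above `x` with color adjacent to that of `x`. -/
def USet (θ : Γ → Γ → ℤ) (κ : P → Γ) (x : P) : Set P :=
  {y : P | x < y ∧ AdjColor θ (κ y) (κ x)}

/-- `L(x,P)`: elements below `x` with color adjacent to that of `x`. -/
def LSet (θ : Γ → Γ → ℤ) (κ : P → Γ) (x : P) : Set P :=
  {y : P | y < x ∧ AdjColor θ (κ y) (κ x)}

/-- (UCB1) Upper frontier census bound. -/
def ColoredUCB1 (θ : Γ → Γ → ℤ) (κ : P → Γ) : Prop :=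
  ∀ x : P, (∀ y : P, κ y = κ x → ¬x < y) →
    (USet θ κ x).Finite ∧ (∑ᶠ y ∈ USet θ κ x, -θ (κ y) (κ x)) ≤ 1

/-- (LCB1) Lower frontier census bound. -/
def ColoredLCB1 (θ : Γ → Γ → ℤ) (κ : P → Γ) : Prop :=
  ∀ x : P, (∀ y : P, κ y = κ x → ¬y < x) →
    (LSet θ κ x).Finite ∧ (∑ᶠ y ∈ LSet θ κ x, -θ (κ y) (κ x)) ≤ 1

/-- A Γ-colored d-complete poset: locally finite, surjectively colored, and
satisfying EC, NA, AC, ICE2, and UCB1. -/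
def GColoredDComplete (θ : Γ → Γ → ℤ) (κ : P → Γ) : Prop :=
  LocallyFinitePoset P ∧ Function.Surjective κ ∧ ColoredEC κ ∧ ColoredNA θ κ ∧
    ColoredAC θ κ ∧ ColoredICE2 θ κ ∧ ColoredUCB1 θ κ

/-- A Γ-colored minuscule poset: Γ-colored d-complete and LCB1. -/
def GColoredMinuscule (θ : Γ → Γ → ℤ) (κ : P → Γ) : Prop :=
  GColoredDComplete θ κ ∧ ColoredLCB1 θ κ

/-- The top tree: the set of elements maximal in their color class. -/
def TopTree (κ : P → Γ) : Set P := {x : P | ∀ y : P, κ y = κ x → ¬x < y}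

/-- `x` is covered by `y` within the subposet `S`. -/
def CoversIn (S : Set P) (x y : P) : Prop :=
  x ∈ S ∧ y ∈ S ∧ x < y ∧ ∀ z ∈ S, x < z → ¬z < y

/-- Slant irreducibility of a Γ-colored d-complete poset. -/
def SlantIrreducible (κ : P → Γ) : Prop :=
  ConnectedPoset P ∧ ∀ x y : P, CoversIn (TopTree κ) x y → ∃ z : P, z ≠ y ∧ κ z = κ y

/-- A saturated chain in a subposet `S`: a chain that is convex in `S`. -/
def SaturatedChainIn (S C : Set P) : Prop :=
  C ⊆ S ∧ IsChain (· ≤ ·) C ∧ ∀ x ∈ C, ∀ y ∈ C, ∀ z ∈ S, x < z → z < y → z ∈ C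

/-- The lower frontier census at the element `y`. -/
noncomputable def LCensus (θ : Γ → Γ → ℤ) (κ : P → Γ) (y : P) : ℤ :=
  ∑ᶠ x ∈ LSet θ κ y, -θ (κ x) (κ y)

/-- A full heap: locally finite, surjectively colored, EC, NA, AC, ICE2, and every
color class order-isomorphic to ℤ. -/
def FullHeap (θ : Γ → Γ → ℤ) (κ : P → Γ) : Prop :=
  LocallyFinitePoset P ∧ Function.Surjective κ ∧ ColoredEC κ ∧ ColoredNA θ κ ∧
    ColoredAC θ κ ∧ ColoredICE2 θ κ ∧ ∀ a : Γ, Nonempty ({x : P // κ x = a} ≃o ℤ)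

end

/-- `ι` realizes the colored poset `A` as an order filter of the colored poset `B`. -/
def FilterEmbedding {G : Type*} {A B : Type*} [PartialOrder A] [PartialOrder B]
    (κ : A → G) (κ' : B → G) (ι : A → B) : Prop :=
  (∀ p q : A, ι p ≤ ι q ↔ p ≤ q) ∧ (∀ p : A, κ' (ι p) = κ p) ∧ IsUpperSet (Set.range ι)

/-- `B` is an extension of `A` by the color `a`, with extending element `x`. -/
def IsExtensionBy {G : Type*} {A B : Type*} [PartialOrder A] [PartialOrder B]
    (θ : G → G → ℤ) (κ : A → G) (κ' : B → G) (a : G) (ι : A → B) (x : B) : Prop :=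
  Finite B ∧ GColoredDComplete θ κ' ∧ ConnectedPoset B ∧
    FilterEmbedding κ κ' ι ∧ (Set.range ι)ᶜ = {x} ∧ κ' x = a

/-!
Take consecutive elements `u < v` of a repeated color `a` in the chain, with `v` as low as
possible. By ICE2 and simple lacedness exactly two elements `q < r` of `(u, v)` have colors
adjacent to `a`, and `κ q ≠ κ r`: this is a ladder `u < q < r < v`. Ladders climb: the cover
`q'` of `q` below `r` and `v` both lie in `U(q, P)`, so by UCB1 the color of `q` recurs above
`q`. Its next occurrence `s` lies above `v`, since otherwise, having a color adjacent to `a`, it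
would be `q` or `r`. Then `q < q' < v < s` is a ladder with a higher top, and this cannot go on
forever in a finite poset.
-/

open Set

section Colors

variable {θ : Γ → Γ → ℤ} {a b : Γ}

theorem AdjColor.ne (hθ : DynkinDatum θ) (h : AdjColor θ a b) : a ≠ b := by
  rintro rfl
  have := hθ.1 a
  unfold AdjColor at h
  omega

theorem AdjColor.symm (hθ : DynkinDatum θ) (h : AdjColor θ a b) : AdjColor θ b a := by
  have hab := h.ne hθ
  have := hθ.2.1 b a hab.symm
  have := hθ.2.2 a b hab
  unfold AdjColor at h ⊢
  omega

theorem SimplyLaced.eq_neg_one (hsl : SimplyLaced θ) (hab : a ≠ b) (h : AdjColor θ a b) :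
    θ a b = -1 := by
  have := hsl a b hab
  unfold AdjColor at h
  omega

theorem SimplyLaced.eq_zero (hsl : SimplyLaced θ) (hab : a ≠ b) (h : ¬AdjColor θ a b) :
    θ a b = 0 := by
  have := hsl a b hab
  unfold AdjColor at h
  omega

theorem SimplyLaced.finsum_mem_neg_eq_ncard {κ : P → Γ} (hsl : SimplyLaced θ) {S : Set P}
    (hS : S.Finite) (ha : ∀ z ∈ S, κ z ≠ a) :
    ∑ᶠ z ∈ S, -θ (κ z) a = ({z ∈ S | AdjColor θ (κ z) a}.ncard : ℤ) := by
  have on_adj : ∀ z ∈ S ∩ {z | AdjColor θ (κ z) a}, -θ (κ z) a = 1 := fun z hz => by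
    rw [hsl.eq_neg_one (ha z hz.1) hz.2, neg_neg]
  have off_adj : ∀ z ∈ S \ {z | AdjColor θ (κ z) a}, -θ (κ z) a = 0 := fun z hz => by
    rw [hsl.eq_zero (ha z hz.1) hz.2, neg_zero]
  rw [← finsum_mem_inter_add_sdiff _ hS, finsum_mem_congr rfl on_adj,
    finsum_mem_of_eqOn_zero off_adj, add_zero, ← Nat.cast_one,
    ← Nat.cast_finsum_mem (hS.inter_of_left _), finsum_one]
  rfl

end Colors

theorem IsChain.exists_lt_eq_injOn_inter_Iio {α β : Type*} [PartialOrder α] [WellFoundedLT α]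
    {s : Set α} {f : α → β} (hs : IsChain (· ≤ ·) s) (h : ¬s.InjOn f) :
    ∃ u ∈ s, ∃ v ∈ s, u < v ∧ f u = f v ∧ (s ∩ Iio v).InjOn f := by
  let HasRepeatBelow : α → Prop := fun v => v ∈ s ∧ ∃ u ∈ s, u < v ∧ f u = f v
  have larger_has_repeat : ∀ a ∈ s, ∀ b ∈ s, f a = f b → a ≠ b →
      HasRepeatBelow a ∨ HasRepeatBelow b := by
    intro a ha b hb hab hne
    rcases hs.total ha hb with hle | hle
    · exact Or.inr ⟨hb, a, ha, hle.lt_of_ne hne, hab⟩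
    · exact Or.inl ⟨ha, b, hb, hle.lt_of_ne hne.symm, hab.symm⟩
  obtain ⟨a, ha, b, hb, hab, hne⟩ : ∃ a ∈ s, ∃ b ∈ s, f a = f b ∧ a ≠ b := by
    simpa [InjOn] using h
  obtain ⟨v, hv⟩ := exists_minimal_of_wellFoundedLT HasRepeatBelow
    ((larger_has_repeat a ha b hb hab hne).elim (⟨a, ·⟩) (⟨b, ·⟩))
  obtain ⟨hvs, u, hus, huv, hfuv⟩ := hv.prop
  refine ⟨u, hus, v, hvs, huv, hfuv, fun a ha b hb hab => by_contra fun hne => ?_⟩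
  rcases larger_has_repeat a ha.1 b hb.1 hab hne with h | h
  · exact hv.not_prop_of_lt ha.2 h
  · exact hv.not_prop_of_lt hb.2 h

section ColoredPoset

variable [PartialOrder P] {θ : Γ → Γ → ℤ} {κ : P → Γ}

def ColorConsecutive (κ : P → Γ) (p t : P) : Prop :=
  p < t ∧ κ t = κ p ∧ ∀ z ∈ Ioo p t, κ z ≠ κ p

theorem exists_colorConsecutive [WellFoundedLT P] {x s : P} (hxs : x < s) (hs : κ s = κ x) :
    ∃ t, ColorConsecutive κ x t := by
  obtain ⟨t, ht⟩ := exists_minimal_of_wellFoundedLT (fun t => x < t ∧ κ t = κ x) ⟨s, hxs, hs⟩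
  exact ⟨t, ht.prop.1, ht.prop.2, fun z hz hzx => ht.not_prop_of_lt hz.2 ⟨hz.1, hzx⟩⟩

theorem GColoredDComplete.ncard_adj_Ioo_eq_two (hdc : GColoredDComplete θ κ)
    (hsl : SimplyLaced θ) {p t : P} (hpt : ColorConsecutive κ p t) :
    {z ∈ Ioo p t | AdjColor θ (κ z) (κ p)}.ncard = 2 := by
  have hfin : (Ioo p t).Finite := (hdc.1 p t).subset Ioo_subset_Icc_self
  have hice2 := hdc.2.2.2.2.2.1 (κ p) p t rfl hpt.2.1 hpt.1 hpt.2.2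
  rw [hsl.finsum_mem_neg_eq_ncard hfin hpt.2.2] at hice2
  exact_mod_cast hice2

theorem GColoredDComplete.exists_gt_color_eq (hdc : GColoredDComplete θ κ)
    (hθ : DynkinDatum θ) (hsl : SimplyLaced θ) {x y₁ y₂ : P} (h₁ : y₁ ∈ USet θ κ x)
    (h₂ : y₂ ∈ USet θ κ x) (hne : y₁ ≠ y₂) : ∃ s, x < s ∧ κ s = κ x := by
  by_contra! hmax
  obtain ⟨hfin, hucb1⟩ := hdc.2.2.2.2.2.2 x fun s hs hxs => hmax s hxs hs
  rw [hsl.finsum_mem_neg_eq_ncard hfin fun y hy => hy.2.ne hθ,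
    sep_eq_self_iff_mem_true.2 fun y hy => hy.2] at hucb1
  have := (one_lt_ncard_iff hfin).2 ⟨y₁, y₂, h₁, h₂, hne⟩
  omega

structure ColorLadder (θ : Γ → Γ → ℤ) (κ : P → Γ) (p q r t : P) : Prop where
  consecutive : ColorConsecutive κ p t
  adj_eq : {z ∈ Ioo p t | AdjColor θ (κ z) (κ p)} = {q, r}
  lt : q < r
  color_ne : κ r ≠ κ q

theorem ColorLadder.exists_next [WellFoundedLT P] (hθ : DynkinDatum θ) (hsl : SimplyLaced θ)
    (hdc : GColoredDComplete θ κ) {p q r t : P} (hl : ColorLadder θ κ p q r t) :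
    ∃ q' s, t < s ∧ ColorLadder θ κ q q' t s := by
  obtain ⟨⟨hpt, htp, hcons⟩, hadj, hqr, hrq⟩ := hl
  have hq : q ∈ {z ∈ Ioo p t | AdjColor θ (κ z) (κ p)} := hadj ▸ mem_insert q {r}
  have hr : r ∈ {z ∈ Ioo p t | AdjColor θ (κ z) (κ p)} := hadj ▸ mem_insert_of_mem q rfl
  obtain ⟨q', hqq', hq'r⟩ := exists_covBy_le_of_lt hqr
  have hq't : q' < t := hq'r.trans_lt hr.1.2
  have hq'U : q' ∈ USet θ κ q := ⟨hqq'.lt, (hdc.2.2.2.1 q q' hqq').symm hθ⟩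
  have htU : t ∈ USet θ κ q := ⟨hq.1.2, by rw [htp]; exact hq.2.symm hθ⟩
  obtain ⟨s₀, hqs₀, hs₀⟩ := hdc.exists_gt_color_eq hθ hsl hq'U htU hq't.ne
  obtain ⟨s, hqs⟩ := exists_colorConsecutive hqs₀ hs₀
  have hst_adj : AdjColor θ (κ s) (κ t) := by rw [hqs.2.1, htp]; exact hq.2
  have hst : s ≠ t := fun h => hst_adj.ne hθ (congrArg κ h)
  have hts : t < s := by
    refine ((hdc.2.2.2.2.1 s t hst_adj).resolve_left fun hs_le => ?_).lt_of_ne hst.symm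
    have hs_mem : s ∈ {z ∈ Ioo p t | AdjColor θ (κ z) (κ p)} :=
      ⟨⟨hq.1.1.trans hqs.1, hs_le.lt_of_ne hst⟩, by rw [← htp]; exact hst_adj⟩
    rw [hadj] at hs_mem
    rcases hs_mem with rfl | rfl
    · exact lt_irrefl _ hqs.1
    · exact hrq hqs.2.1
  have hpair : {q', t} ⊆ {z ∈ Ioo q s | AdjColor θ (κ z) (κ q)} :=
    insert_subset_iff.2 ⟨⟨⟨hqq'.lt, hq't.trans hts⟩, hq'U.2⟩,
      singleton_subset_iff.2 ⟨⟨hq.1.2, hts⟩, htU.2⟩⟩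
  refine ⟨q', s, hts, hqs, ?_, hq't, fun h => hcons q' ⟨hq.1.1.trans hqq'.lt, hq't⟩ (h ▸ htp)⟩
  refine (eq_of_subset_of_ncard_le hpair ?_ ((hdc.1 q s).subset ?_)).symm
  · rw [hdc.ncard_adj_Ioo_eq_two hsl hqs, ncard_pair hq't.ne]
  · exact sep_subset _ _ |>.trans Ioo_subset_Icc_self

theorem GColoredDComplete.not_colorLadder [WellFoundedLT P] [WellFoundedGT P]
    (hdc : GColoredDComplete θ κ) (hθ : DynkinDatum θ) (hsl : SimplyLaced θ) (p q r t : P) :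
    ¬ColorLadder θ κ p q r t := by
  induction t using WellFoundedGT.induction generalizing p q r with
  | _ t ih =>
    intro hl
    obtain ⟨q', s, hts, hl'⟩ := hl.exists_next hθ hsl hdc
    exact ih s hts q q' t hl'

theorem GColoredDComplete.exists_colorLadder (hdc : GColoredDComplete θ κ)
    (hsl : SimplyLaced θ) {p t : P} (hpt : ColorConsecutive κ p t)
    (hchain : IsChain (· ≤ ·) (Ioo p t)) (hinj : (Ioo p t).InjOn κ) :
    ∃ q r, ColorLadder θ κ p q r t := by
  obtain ⟨a, b, hne, hab⟩ := ncard_eq_two.1 (hdc.ncard_adj_Ioo_eq_two hsl hpt)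
  have ha : a ∈ Ioo p t := (hab ▸ mem_insert a {b} :
    a ∈ {z ∈ Ioo p t | AdjColor θ (κ z) (κ p)}).1
  have hb : b ∈ Ioo p t := (hab ▸ mem_insert_of_mem a rfl :
    b ∈ {z ∈ Ioo p t | AdjColor θ (κ z) (κ p)}).1
  rcases hchain.total ha hb with h | h
  · exact ⟨a, b, hpt, hab, h.lt_of_ne hne, fun h' => hne (hinj ha hb h'.symm)⟩
  · exact ⟨b, a, hpt, hab.trans (pair_comm a b), h.lt_of_ne hne.symm,
      fun h' => hne (hinj ha hb h')⟩

end ColoredPoset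

theorem chain_interval_injOn_general [PartialOrder P] [Fintype P]
    (θ : Γ → Γ → ℤ) (κ : P → Γ) (hθ : DynkinDatum θ) (hsl : SimplyLaced θ)
    (hdc : GColoredDComplete θ κ) (x y : P)
    (hchain : IsChain (· ≤ ·) (Set.Icc x y)) :
    Set.InjOn κ (Set.Icc x y) := by
  by_contra hninj
  obtain ⟨u, hu, v, hv, huv, hcol, hinj⟩ := hchain.exists_lt_eq_injOn_inter_Iio hninj
  have hsub : Ioo u v ⊆ Icc x y ∩ Iio v :=
    fun z hz => ⟨⟨hu.1.trans hz.1.le, hz.2.le.trans hv.2⟩, hz.2⟩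
  have hcons : ColorConsecutive κ u v :=
    ⟨huv, hcol.symm, fun z hz hzu => hz.1.ne (hinj ⟨hu, huv⟩ (hsub hz) hzu.symm)⟩
  obtain ⟨q, r, hl⟩ := hdc.exists_colorLadder hsl hcons
    (hchain.mono (hsub.trans inter_subset_left)) (hinj.mono hsub)
  exact hdc.not_colorLadder hθ hsl u q r v hl

/-- In a finite Γ-colored d-complete poset with Γ simply laced, a closed
interval which is a chain has no repeated colors. -/
theorem chain_interval_injOn [Fintype Γ] [PartialOrder P] [Fintype P]
    (θ : Γ → Γ → ℤ) (κ : P → Γ) (hθ : DynkinDatum θ) (hsl : SimplyLaced θ)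
    (hdc : GColoredDComplete θ κ) (x y : P) (hxy : x < y)
    (hchain : IsChain (· ≤ ·) (Set.Icc x y)) :
    Set.InjOn κ (Set.Icc x y) :=
  chain_interval_injOn_general θ κ hθ hsl hdc x y hchain
end

section
/- Let P be a slant irreducible finite Γ-colored d-complete poset with top tree T. Then every element of T that is not minimal in T covers at most two elements of P. -/
/-!
Let `y` be a non-minimal element of the top tree. Within the top tree it covers some `z`, so by
slant irreducibility its color `a` occurs a second time, necessarily below `y`. Let `x < y` be
the consecutive element of color `a`. Every element covered by `y` has a color adjacent to `a`,
hence is comparable with `x` and lies in the open interval `(x, y)`, where it contributes at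
least one to the ICE2 census, which equals two.
-/

universe u v w

variable {Γ : Type u} {P : Type v}

open Set

lemma ncard_le_finsum_mem_of_subset {α : Type*} {s t : Set α} {f : α → ℤ} (ht : t.Finite)
    (hst : s ⊆ t) (h1 : ∀ x ∈ s, 1 ≤ f x) (h0 : ∀ x ∈ t, 0 ≤ f x) :
    (s.ncard : ℤ) ≤ ∑ᶠ x ∈ t, f x := by
  lift s to Finset α using ht.subset hst
  lift t to Finset α using ht
  rw [finsum_mem_coe_finset, ncard_coe_finset]
  calc (s.card : ℤ) = ∑ _ ∈ s, (1 : ℤ) := by simp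
    _ ≤ ∑ x ∈ s, f x := Finset.sum_le_sum h1
    _ ≤ ∑ x ∈ t, f x :=
      Finset.sum_le_sum_of_subset_of_nonneg (Finset.coe_subset.mp hst) fun x hx _ => h0 x hx

section

variable [PartialOrder P] {θ : Γ → Γ → ℤ} {κ : P → Γ} {S : Set P} {x y z w : P}

lemma LocallyFinitePoset.exists_maximal_of_bddAbove (hlf : LocallyFinitePoset P)
    (hne : S.Nonempty) (hbdd : BddAbove S) : ∃ m, Maximal (· ∈ S) m := by
  obtain ⟨z, hz⟩ := hne
  obtain ⟨y, hy⟩ := hbdd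
  have hfin : (S ∩ Ici z).Finite := (hlf z y).subset fun u hu => ⟨hu.2, hy hu.1⟩
  obtain ⟨m, hzm, hm⟩ := hfin.exists_le_maximal ⟨hz, le_rfl⟩
  exact ⟨m, hm.1.1, fun v hv hmv => hm.2 ⟨hv, hzm.trans hmv⟩ hmv⟩

lemma coversIn_of_maximal (hy : y ∈ S) (hx : Maximal (· ∈ S ∩ Iio y) x) : CoversIn S x y :=
  ⟨hx.1.1, hy, hx.1.2, fun _ hv hxv hvy => hxv.not_ge (hx.2 ⟨hv, hvy⟩ hxv.le)⟩

lemma LocallyFinitePoset.exists_coversIn (hlf : LocallyFinitePoset P) (hy : y ∈ S)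
    (hz : z ∈ S) (hzy : z < y) : ∃ x, CoversIn S x y := by
  obtain ⟨x, hx⟩ := hlf.exists_maximal_of_bddAbove (S := S ∩ Iio y) ⟨z, hz, hzy⟩
    ⟨y, fun _ hu => (mem_Iio.mp hu.2).le⟩
  exact ⟨x, coversIn_of_maximal hy hx⟩

lemma lt_of_mem_topTree (hEC : ColoredEC κ) (hy : y ∈ TopTree κ) (hw : κ w = κ y)
    (hwy : w ≠ y) : w < y :=
  ((hEC w y hw).resolve_right fun h => hy w hw (h.lt_of_ne hwy.symm)).lt_of_ne hwy

lemma not_adjColor_self (hθ : DynkinDatum θ) (a : Γ) : ¬AdjColor θ a a := by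
  simp [AdjColor, hθ.1 a]

lemma mem_Ioo_of_covBy (hθ : DynkinDatum θ) (hNA : ColoredNA θ κ) (hAC : ColoredAC θ κ)
    (hx : κ x = κ y) (hxy : x < y) (hv : w ⋖ y) : w ∈ Ioo x y := by
  have hadj : AdjColor θ (κ w) (κ x) := hx ▸ hNA w y hv
  have hne : w ≠ x := fun h => not_adjColor_self hθ _ (h ▸ hadj)
  rcases hAC w x hadj with h | h
  · exact absurd hxy (hv.2 (h.lt_of_ne hne))
  · exact ⟨h.lt_of_ne hne.symm, hv.1⟩

/-- `CoversIn {u | κ u = κ y} x y` says that `x < y` are consecutive elements of color `κ y`. -/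
lemma ncard_covBy_le_two (hlf : LocallyFinitePoset P) (hθ : DynkinDatum θ)
    (hNA : ColoredNA θ κ) (hAC : ColoredAC θ κ) (hICE2 : ColoredICE2 θ κ)
    (hx : CoversIn {u | κ u = κ y} x y) : {v | v ⋖ y}.ncard ≤ 2 := by
  obtain ⟨hxc, -, hxy, hcons⟩ := hx
  have hgap : ∀ u ∈ Ioo x y, κ u ≠ κ y := fun u hu hu' => hcons u hu' hu.1 hu.2
  have hcensus := hICE2 (κ y) x y hxc rfl hxy hgap
  have hcount := ncard_le_finsum_mem_of_subset (s := {v | v ⋖ y})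
    (f := fun u => -θ (κ u) (κ y))
    ((hlf x y).subset Ioo_subset_Icc_self)
    (fun v hv => mem_Ioo_of_covBy hθ hNA hAC hxc hxy hv)
    (fun v hv => by have := hNA v y hv; simp only [AdjColor] at this; omega)
    (fun u hu => by have := hθ.2.1 _ _ (hgap u hu); omega)
  omega

end

theorem topTree_covers_at_most_two_general [PartialOrder P]
    (θ : Γ → Γ → ℤ) (κ : P → Γ) (hθ : DynkinDatum θ)
    (hdc : GColoredDComplete θ κ) (hsi : SlantIrreducible κ) :
    ∀ y ∈ TopTree κ, (∃ z ∈ TopTree κ, z < y) → {x : P | x ⋖ y}.ncard ≤ 2 := by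
  rintro y hy ⟨z, hz, hzy⟩
  obtain ⟨hlf, -, hEC, hNA, hAC, hICE2, -⟩ := hdc
  obtain ⟨z₀, hz₀⟩ := hlf.exists_coversIn hy hz hzy
  obtain ⟨w, hwy, hw⟩ := hsi.2 z₀ y hz₀
  obtain ⟨x, hx⟩ := hlf.exists_coversIn (S := {u | κ u = κ y}) rfl hw
    (lt_of_mem_topTree hEC hy hw hwy)
  exact ncard_covBy_le_two hlf hθ hNA hAC hICE2 hx

/-- In a slant irreducible finite Γ-colored d-complete poset, every
element of the top tree that is not minimal in the top tree covers at most two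
elements of P. -/
theorem topTree_covers_at_most_two [Fintype Γ] [PartialOrder P] [Fintype P] [Nonempty P]
    (θ : Γ → Γ → ℤ) (κ : P → Γ) (hθ : DynkinDatum θ)
    (hdc : GColoredDComplete θ κ) (hsi : SlantIrreducible κ) :
    ∀ y ∈ TopTree κ, (∃ z ∈ TopTree κ, z < y) → {x : P | x ⋖ y}.ncard ≤ 2 :=
  topTree_covers_at_most_two_general θ κ hθ hdc hsi
end
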